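/- Let d ≥ 1, let F₀ ⊆ E := EuclideanSpace ℝ (Fin d), and let P ⊆ E be nonempty. Set F := ⋃_{x ∈ P} (F₀ + x), where F₀ + x := { z + x | z ∈ F₀ }. Assume: (a) the set of connected components of F is exactly { F₀ + x | x ∈ P }; and (b) every isometric bijection a of E with a '' F₀ = F₀ satisfies a 0 = 0. Then: (1) an isometric bijection b of E satisfies (∃ K ∈ cc F, b '' K ∈ cc F) if and only if there exist x, y ∈ P and an isometric bijection a with a '' F₀ = F₀ and a 0 = 0 such that b z = a (z - x) + y for all z ∈ E; and (2) for x, y, x', y' ∈ P and isometric bijections a, a' fixing 0 with a '' F₀ = F₀ = a' '' F₀, the equality (∀ z, a (z - x) + y = a' (z - x') + y') holds if and only if a = a' and a (x' - x) = y' - y. (Part (1) describes 𝒫(F)₁ and part (2) is the congruence relation (12.5); together they are the degree-1 content of the paper's Theorem 12.3, which applies to the Six Coins: 𝒫(F) ≅ (𝒱(P) ⋉ ⋁_P G(F₀)) / ∼.) -/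
import Mathlib


/-- The set of connected components of a figure `F`. -/
def connComps {d : ℕ} (F : Set (EuclideanSpace ℝ (Fin d))) :
    Set (Set (EuclideanSpace ℝ (Fin d))) :=
  {K | ∃ z ∈ F, K = connectedComponentIn F z}

/-- An isometric bijection fixing `0` maps differences to differences (Mazur–Ulam). -/
lemma isometryEquiv_map_sub {d : ℕ}
    (a : EuclideanSpace ℝ (Fin d) ≃ᵢ EuclideanSpace ℝ (Fin d)) (h0 : a 0 = 0)
    (u v : EuclideanSpace ℝ (Fin d)) : a (u - v) = a u - a v := by
  have h := a.coe_toRealLinearIsometryEquivOfMapZero h0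
  calc a (u - v) = (a.toRealLinearIsometryEquivOfMapZero h0) (u - v) := by rw [h]
    _ = (a.toRealLinearIsometryEquivOfMapZero h0) u
        - (a.toRealLinearIsometryEquivOfMapZero h0) v := map_sub _ _ _
    _ = a u - a v := by rw [h]

/-- Theorem 12.3 (degree-1 content, e.g. the Six Coins): for a figure `F` whose connected
components are the translates `F₀ + x` (`x ∈ P`) of a figure `F₀` whose symmetries all
fix the origin: (1) the length-1 parades of `𝒫(F)` are exactly the maps
`z ↦ a (z - x) + y` with `x, y ∈ P` and `a` a symmetry of `F₀` fixing `0`; and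
(2) two such presentations give the same map iff `a = a'` and `a (x' - x) = y' - y`. -/
theorem parade_translates_description (d : ℕ) (hd : 1 ≤ d)
    (F0 : Set (EuclideanSpace ℝ (Fin d)))
    (P : Set (EuclideanSpace ℝ (Fin d))) (hP : P.Nonempty)
    (F : Set (EuclideanSpace ℝ (Fin d)))
    (hF : F = ⋃ x ∈ P, (fun z => z + x) '' F0)
    (hcc : connComps F = {K | ∃ x ∈ P, K = (fun z => z + x) '' F0})
    (hO : ∀ a : EuclideanSpace ℝ (Fin d) ≃ᵢ EuclideanSpace ℝ (Fin d),
      a '' F0 = F0 → a 0 = 0) :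
    (∀ b : EuclideanSpace ℝ (Fin d) ≃ᵢ EuclideanSpace ℝ (Fin d),
      (∃ K ∈ connComps F, b '' K ∈ connComps F) ↔
        ∃ x ∈ P, ∃ y ∈ P, ∃ a : EuclideanSpace ℝ (Fin d) ≃ᵢ EuclideanSpace ℝ (Fin d),
          a '' F0 = F0 ∧ a 0 = 0 ∧ ∀ z, b z = a (z - x) + y) ∧
    (∀ x ∈ P, ∀ y ∈ P, ∀ x' ∈ P, ∀ y' ∈ P,
      ∀ a a' : EuclideanSpace ℝ (Fin d) ≃ᵢ EuclideanSpace ℝ (Fin d),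
        a '' F0 = F0 → a' '' F0 = F0 → a 0 = 0 → a' 0 = 0 →
          ((∀ z, a (z - x) + y = a' (z - x') + y') ↔
            (a = a' ∧ a (x' - x) = y' - y))) := by
  constructor
  · intro b
    constructor
    · rintro ⟨K, hK, hbK⟩
      rw [hcc] at hK hbK
      obtain ⟨x, hx, rfl⟩ := hK
      obtain ⟨y, hy, hKy⟩ := hbK
      refine ⟨x, hx, y, hy, ?_⟩
      set a : EuclideanSpace ℝ (Fin d) ≃ᵢ EuclideanSpace ℝ (Fin d) :=
        (IsometryEquiv.addRight x).trans (b.trans (IsometryEquiv.addRight (-y))) with ha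
      have haz : ∀ z, a z = b (z + x) + (-y) := fun z => rfl
      have haF : a '' F0 = F0 := by
        have h1 : (⇑a) '' F0 = (fun w => w + (-y)) '' (⇑b '' ((fun z => z + x) '' F0)) := by
          rw [Set.image_image, Set.image_image]
          exact Set.image_congr fun z _ => haz z
        rw [h1, hKy, Set.image_image]
        simp
      refine ⟨a, haF, hO a haF, fun z => ?_⟩
      rw [haz]
      simp
    · rintro ⟨x, hx, y, hy, a, haF, ha0, hb⟩
      refine ⟨(fun z => z + x) '' F0, ?_, ?_⟩
      · rw [hcc]; exact ⟨x, hx, rfl⟩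
      · rw [hcc]
        refine ⟨y, hy, ?_⟩
        have e1 : ⇑b '' ((fun z => z + x) '' F0) = (fun z => z + y) '' (⇑a '' F0) := by
          rw [Set.image_image, Set.image_image]
          exact Set.image_congr fun z _ => by rw [hb]; simp
        rw [e1, haF]
  · intro x hx y hy x' hx' y' hy' a a' haF ha'F ha0 ha'0
    constructor
    · intro h
      have h2 : y = a' (x - x') + y' := by
        have := h x
        simpa [ha0] using this
      have e2 : a' (x - x') = y - y' := by
        rw [eq_sub_iff_add_eq]; exact h2.symm
      have key : ∀ w, a w = a' w := by
        intro w
        have h1 : a w + y = a' (w + x - x') + y' := by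
          have := h (w + x)
          simpa using this
        have e1 : a' (w + x - x') = a w + y - y' := by
          rw [eq_sub_iff_add_eq]; exact h1.symm
        have m : a' (w + x - x' - (x - x')) = a' (w + x - x') - a' (x - x') :=
          isometryEquiv_map_sub a' ha'0 _ _
        have heq : w + x - x' - (x - x') = w := by abel
        rw [heq, e1, e2] at m
        rw [m]; abel
      have haa : a = a' := IsometryEquiv.ext key
      refine ⟨haa, ?_⟩
      rw [haa]
      have m1 : a' (x' - x) = a' x' - a' x := isometryEquiv_map_sub a' ha'0 _ _
      have m2 : a' (x - x') = a' x - a' x' := isometryEquiv_map_sub a' ha'0 _ _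
      rw [m2] at e2
      rw [m1, ← neg_sub (a' x) (a' x'), e2]
      abel
    · rintro ⟨rfl, hax⟩
      intro z
      have m : a (z - x - (x' - x)) = a (z - x) - a (x' - x) :=
        isometryEquiv_map_sub a ha0 _ _
      have heq : z - x - (x' - x) = z - x' := by abel
      rw [heq, hax] at m
      rw [m]
      abel
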